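/- Suppose 0 < c₁ < 6^{−1/2} and X ≥ 1. Then for any three points x, y, z ∈ A³ each satisfying the inequalities |·₀| ≤ X and L(·) ≤ c₁·X^{−1/γ}, the 3×3 determinant det(x, y, z) is zero. Consequently, the set of solutions of these inequalities in A³ is contained in a K-vector subspace of K³ of dimension at most 2. -/

import Mathlib

/-!
Subtracting `ξ` and `ξ²` times the first column of `det (x, y, z)` from the other two columns
(over `K̄`) leaves a matrix whose first column is bounded by `X` and whose other two columns are
bounded by `ε = c₁ X^(-1/γ)`. Hence `|det| ≤ 3! X ε² = 6 c₁² X^(1 - 2/γ) < 1`, because `γ < 2`;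
as a nonzero element of `A` has absolute value at least `1`, the determinant vanishes.
Three `K`-linearly independent solutions would have a nonzero determinant, so the solutions
span at most a plane.
-/

open Module Submodule

namespace Matrix

theorem det_le_factorial_mul_prod {R S : Type*} [CommRing R] [Nontrivial R]
    [CommRing S] [LinearOrder S] [IsStrictOrderedRing S]
    {n : Type*} [Fintype n] [DecidableEq n]
    {M : Matrix n n R} {abv : AbsoluteValue R S} {B : n → S}
    (hB : ∀ i j, abv (M i j) ≤ B j) :
    abv M.det ≤ (Fintype.card n).factorial • ∏ j, B j :=
  calc
    abv M.det = abv (∑ σ : Equiv.Perm n, Equiv.Perm.sign σ • ∏ j, M (σ j) j) :=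
      congr_arg abv (det_apply _)
    _ ≤ ∑ σ : Equiv.Perm n, abv (Equiv.Perm.sign σ • ∏ j, M (σ j) j) := abv.sum_le _ _
    _ = ∑ σ : Equiv.Perm n, ∏ j, abv (M (σ j) j) :=
      Finset.sum_congr rfl fun σ _ => by rw [abv.map_units_int_smul, abv.map_prod]
    _ ≤ ∑ _σ : Equiv.Perm n, ∏ j, B j := by
      gcongr with σ _ j
      exact hB _ _
    _ = (Fintype.card n).factorial • ∏ j, B j := by simp [Fintype.card_perm]

end Matrix

theorem finrank_span_lt_of_forall_det_eq_zero {K : Type*} [Field K] {n : ℕ}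
    (S : Set (Fin n → K))
    (hS : ∀ v : Fin n → Fin n → K, (∀ i, v i ∈ S) → (Matrix.of v).det = 0) :
    finrank K (span K S) < n := by
  by_contra! hn
  obtain ⟨t, htS, hspan, hli⟩ := exists_linearIndependent K S
  have := hli.setFinite.fintype
  have hcard : Fintype.card (Fin n) ≤ Fintype.card t := by
    rw [← hspan, finrank_span_set_eq_card hli, Set.toFinset_card] at hn
    simpa using hn
  obtain ⟨e⟩ := Function.Embedding.nonempty_of_card_le hcard
  have hunit : IsUnit (Matrix.of fun i => (e i : Fin n → K)) :=
    Matrix.linearIndependent_rows_iff_isUnit.mp (hli.comp e e.injective)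
  exact ((Matrix.isUnit_iff_isUnit_det _).mp hunit).ne_zero (hS _ fun i => htS (e i).2)

section Approximation

variable {L : Type*} [CommRing L] (abv : AbsoluteValue L ℝ) (ξ : L)

def IsApproximation (X ε : ℝ) (v : Fin 3 → L) : Prop :=
  abv (v 0) ≤ X ∧ max (abv (v 0 * ξ - v 1)) (abv (v 0 * ξ ^ 2 - v 2)) ≤ ε

def approximationErrors (v : Fin 3 → L) : Fin 3 → L :=
  ![v 0, v 0 * ξ - v 1, v 0 * ξ ^ 2 - v 2]

theorem det_of_approximationErrors (M : Matrix (Fin 3) (Fin 3) L) :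
    (Matrix.of fun i => approximationErrors ξ (M i)).det = M.det := by
  simp only [Matrix.det_fin_three, approximationErrors, Matrix.of_apply, Matrix.cons_val]
  ring

variable [Nontrivial L]

theorem abv_det_le_of_isApproximation {X ε : ℝ} {M : Matrix (Fin 3) (Fin 3) L}
    (hM : ∀ i, IsApproximation abv ξ X ε (M i)) : abv M.det ≤ 6 * (X * ε * ε) := by
  rw [← det_of_approximationErrors ξ M]
  have hB : ∀ i j, abv (Matrix.of (fun i => approximationErrors ξ (M i)) i j) ≤ ![X, ε, ε] j := by
    intro i j
    obtain ⟨h0, h12⟩ := hM i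
    rw [max_le_iff] at h12
    fin_cases j
    exacts [h0, h12.1, h12.2]
  have := Matrix.det_le_factorial_mul_prod hB
  simpa [Fin.prod_univ_three, Nat.factorial, Matrix.cons_val, mul_assoc] using this

theorem det_eq_zero_of_isApproximation {A : Type*} [CommRing A] (g : A →+* L)
    (hg : ∀ a : A, a ≠ 0 → 1 ≤ abv (g a)) {X ε : ℝ} (hXε : 6 * (X * ε * ε) < 1)
    {M : Matrix (Fin 3) (Fin 3) A} (hM : ∀ i, IsApproximation abv ξ X ε (g ∘ M i)) :
    M.det = 0 := by
  by_contra hdet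
  have hbound := abv_det_le_of_isApproximation abv ξ (M := M.map g) hM
  rw [← RingHom.mapMatrix_apply, ← RingHom.map_det] at hbound
  linarith [hg _ hdet]

end Approximation

theorem six_mul_sq_mul_lt_one {c X : ℝ} (hc : 0 ≤ c) (hc' : c < (6 : ℝ) ^ (-1 / 2 : ℝ))
    (hX : 1 ≤ X) :
    6 * (X * (c * X ^ (-1 / Real.goldenRatio)) * (c * X ^ (-1 / Real.goldenRatio))) < 1 := by
  have hc6 : 6 * c ^ 2 < 1 := by
    have h := pow_lt_pow_left₀ hc' hc two_ne_zero
    rw [← Real.rpow_natCast (6 ^ (-1 / 2 : ℝ)) 2, ← Real.rpow_mul (by norm_num)] at h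
    norm_num at h
    linarith
  have hXpow : X * X ^ (-1 / Real.goldenRatio) * X ^ (-1 / Real.goldenRatio) ≤ 1 := by
    have hγ : 1 / 2 < 1 / Real.goldenRatio :=
      one_div_lt_one_div_of_lt Real.goldenRatio_pos Real.goldenRatio_lt_two
    have hγ' : 1 / Real.goldenRatio < 1 := by
      rw [div_lt_one Real.goldenRatio_pos]; exact Real.one_lt_goldenRatio
    have hX0 : 0 < X := by linarith
    rw [← Real.rpow_one_add' hX0.le (by rw [neg_div]; linarith), ← Real.rpow_add hX0]
    exact Real.rpow_le_one_of_one_le_of_nonpos hX (by rw [neg_div]; linarith)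
  calc 6 * (X * (c * X ^ (-1 / Real.goldenRatio)) * (c * X ^ (-1 / Real.goldenRatio)))
      = 6 * c ^ 2 * (X * X ^ (-1 / Real.goldenRatio) * X ^ (-1 / Real.goldenRatio)) := by ring
    _ ≤ 6 * c ^ 2 * 1 := by gcongr
    _ < 1 := by linarith

theorem det_eq_zero_of_solutions
    {A : Type*} [CommRing A]
    {K : Type*} [Field K] [Algebra A K]
    {L : Type*} [Field L]
    (f : K →+* L)
    (abv : AbsoluteValue L ℝ)
    (habv_A : ∀ a : A, a ≠ 0 → 1 ≤ abv (f (algebraMap A K a)))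
    (ξ : L) (c₁ X : ℝ) (hc₁' : c₁ < (6 : ℝ) ^ (-1 / 2 : ℝ))
    (hX : 1 ≤ X) :
    (∀ x y z : Fin 3 → A,
      (abv (f (algebraMap A K (x 0))) ≤ X ∧
        max (abv (f (algebraMap A K (x 0)) * ξ - f (algebraMap A K (x 1))))
            (abv (f (algebraMap A K (x 0)) * ξ ^ 2 - f (algebraMap A K (x 2))))
          ≤ c₁ * X ^ (-1 / Real.goldenRatio)) →
      (abv (f (algebraMap A K (y 0))) ≤ X ∧
        max (abv (f (algebraMap A K (y 0)) * ξ - f (algebraMap A K (y 1))))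
            (abv (f (algebraMap A K (y 0)) * ξ ^ 2 - f (algebraMap A K (y 2))))
          ≤ c₁ * X ^ (-1 / Real.goldenRatio)) →
      (abv (f (algebraMap A K (z 0))) ≤ X ∧
        max (abv (f (algebraMap A K (z 0)) * ξ - f (algebraMap A K (z 1))))
            (abv (f (algebraMap A K (z 0)) * ξ ^ 2 - f (algebraMap A K (z 2))))
          ≤ c₁ * X ^ (-1 / Real.goldenRatio)) →
      Matrix.det (Matrix.of ![x, y, z]) = 0) ∧
    ∃ V : Submodule K (Fin 3 → K), Module.finrank K V ≤ 2 ∧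
      ∀ x : Fin 3 → A,
        (abv (f (algebraMap A K (x 0))) ≤ X ∧
          max (abv (f (algebraMap A K (x 0)) * ξ - f (algebraMap A K (x 1))))
              (abv (f (algebraMap A K (x 0)) * ξ ^ 2 - f (algebraMap A K (x 2))))
            ≤ c₁ * X ^ (-1 / Real.goldenRatio)) →
        (fun j => algebraMap A K (x j)) ∈ V := by
  set g := f.comp (algebraMap A K)
  set ε := c₁ * X ^ (-1 / Real.goldenRatio)
  have hdet : ∀ M : Matrix (Fin 3) (Fin 3) A,
      (∀ i, IsApproximation abv ξ X ε (g ∘ M i)) → M.det = 0 := by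
    intro M hM
    have hε : 0 ≤ ε := (abv.nonneg _).trans ((le_max_left _ _).trans (hM 0).2)
    have hc₁ : 0 ≤ c₁ := nonneg_of_mul_nonneg_left hε (Real.rpow_pos_of_pos (by linarith) _)
    exact det_eq_zero_of_isApproximation abv ξ g habv_A (six_mul_sq_mul_lt_one hc₁ hc₁' hX) hM
  refine ⟨fun x y z hx hy hz => hdet _ fun i => by fin_cases i; exacts [hx, hy, hz], ?_⟩
  let S : Set (Fin 3 → K) :=
    {v | ∃ x : Fin 3 → A, IsApproximation abv ξ X ε (g ∘ x) ∧ algebraMap A K ∘ x = v}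
  refine ⟨span K S, Nat.le_of_lt_succ (finrank_span_lt_of_forall_det_eq_zero S ?_),
    fun x hx => subset_span ⟨x, hx, rfl⟩⟩
  intro v hv
  choose w hw hwv using hv
  have hvw : Matrix.of v = (Matrix.of w).map (algebraMap A K) := by
    ext i j
    simp [← hwv i]
  rw [hvw, ← RingHom.mapMatrix_apply, ← RingHom.map_det, hdet (Matrix.of w) hw, map_zero]
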